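/- (Bohr's theorem, sharpness.) For every real number r with 1/3 < r < 1 there exist a power series Σ_{k=0}^∞ c_k z^k converging on the open unit disk with |Σ_{k=0}^∞ c_k z^k| < 1 for all |z| < 1, and a point z₀ with |z₀| < r, such that Σ_{k=0}^∞ |c_k z₀^k| ≥ 1. -/

import Mathlib

/-!
The extremal functions are the disk automorphisms `φ_a(z) = (a - z) / (1 - a z)`,
`0 < a < 1`. Expanding the geometric series, `φ_a(z) = a - (1 - a²) ∑ aⁿ zⁿ⁺¹`, so at
`|z| = t` the sum of the moduli of the terms is `a + (1 - a²) t / (1 - a t)`, which equals `1`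
exactly when `t = 1 / (1 + 2a)`. As `a → 1` this radius decreases to `1/3`.
-/

open Complex ComplexConjugate

/-- Taylor coefficients at `0` of `z ↦ (a - z) / (1 - conj a * z)`. -/
noncomputable def mobiusCoeff (a : ℂ) : ℕ → ℂ
  | 0 => a
  | n + 1 => -(1 - ‖a‖ ^ 2 : ℝ) * conj a ^ n

theorem normSq_one_sub_conj_mul_sub_normSq_sub (a z : ℂ) :
    normSq (1 - conj a * z) - normSq (a - z) = (1 - normSq a) * (1 - normSq z) := by
  simp only [normSq_apply, sub_re, sub_im, mul_re, mul_im, conj_re, conj_im, one_re, one_im]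
  ring

theorem norm_sub_lt_norm_one_sub_conj_mul {a z : ℂ} (ha : ‖a‖ < 1) (hz : ‖z‖ < 1) :
    ‖a - z‖ < ‖1 - conj a * z‖ := by
  have key := normSq_one_sub_conj_mul_sub_normSq_sub a z
  rw [← Complex.sq_norm a, ← Complex.sq_norm z] at key
  rw [← sq_lt_sq₀ (norm_nonneg _) (norm_nonneg _), Complex.sq_norm, Complex.sq_norm]
  have ha' : ‖a‖ ^ 2 < 1 := by nlinarith [norm_nonneg a]
  have hz' : ‖z‖ ^ 2 < 1 := by nlinarith [norm_nonneg z]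
  nlinarith [mul_pos (sub_pos.2 ha') (sub_pos.2 hz')]

theorem hasSum_mobiusCoeff_mul_pow {a z : ℂ} (h : ‖a‖ * ‖z‖ < 1) :
    HasSum (fun k => mobiusCoeff a k * z ^ k) ((a - z) / (1 - conj a * z)) := by
  have h' : ‖conj a * z‖ < 1 := by rwa [norm_mul, Complex.norm_conj]
  have hne : 1 - conj a * z ≠ 0 := by
    rw [sub_ne_zero]; rintro h1; rw [← h1, norm_one] at h'; exact lt_irrefl _ h'
  have hsq : ((‖a‖ ^ 2 : ℝ) : ℂ) = conj a * a := by
    rw [mul_comm, mul_conj, normSq_eq_norm_sq]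
  have htail : (fun n => mobiusCoeff a (n + 1) * z ^ (n + 1))
      = fun n => -(1 - ‖a‖ ^ 2 : ℝ) * z * (conj a * z) ^ n := by
    funext n; simp only [mobiusCoeff]; ring
  have hval : (a - z) / (1 - conj a * z) - a
      = -(1 - ‖a‖ ^ 2 : ℝ) * z * (1 - conj a * z)⁻¹ := by
    rw [ofReal_sub, ofReal_one, hsq, eq_mul_inv_iff_mul_eq₀ hne, sub_mul, div_mul_cancel₀ _ hne]
    ring
  rw [← hasSum_nat_add_iff' 1, htail, Finset.sum_range_one, mobiusCoeff, pow_zero, mul_one,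
    hval]
  exact (hasSum_geometric_of_norm_lt_one h').mul_left _

theorem norm_tsum_mobiusCoeff_mul_pow_lt_one {a z : ℂ} (ha : ‖a‖ < 1) (hz : ‖z‖ < 1) :
    ‖∑' k, mobiusCoeff a k * z ^ k‖ < 1 := by
  have hlt := norm_sub_lt_norm_one_sub_conj_mul ha hz
  have h : ‖a‖ * ‖z‖ < 1 := mul_lt_one_of_nonneg_of_lt_one_left (norm_nonneg a) ha hz.le
  rwa [(hasSum_mobiusCoeff_mul_pow h).tsum_eq, norm_div,
    div_lt_one ((norm_nonneg _).trans_lt hlt)]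

theorem hasSum_norm_mobiusCoeff_mul_pow {a z : ℂ} (ha : ‖a‖ ≤ 1) (h : ‖a‖ * ‖z‖ < 1) :
    HasSum (fun k => ‖mobiusCoeff a k * z ^ k‖)
      (‖a‖ + (1 - ‖a‖ ^ 2) * ‖z‖ / (1 - ‖a‖ * ‖z‖)) := by
  have hpos : 0 ≤ 1 - ‖a‖ ^ 2 := by nlinarith [norm_nonneg a]
  have htail : (fun n => ‖mobiusCoeff a (n + 1) * z ^ (n + 1)‖)
      = fun n => (1 - ‖a‖ ^ 2) * ‖z‖ * (‖a‖ * ‖z‖) ^ n := by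
    funext n
    simp only [mobiusCoeff, norm_mul, norm_neg, norm_pow, Complex.norm_conj, Complex.norm_real,
      Real.norm_of_nonneg hpos]
    ring
  rw [← hasSum_nat_add_iff' 1, htail, Finset.sum_range_one, mobiusCoeff, pow_zero, mul_one,
    add_sub_cancel_left, div_eq_mul_inv]
  exact (hasSum_geometric_of_lt_one (by positivity) h).mul_left _

theorem hasSum_norm_mobiusCoeff_mul_pow_of_mul_eq_one {a z : ℂ} (ha : ‖a‖ < 1)
    (hz : ‖z‖ * (1 + 2 * ‖a‖) = 1) : HasSum (fun k => ‖mobiusCoeff a k * z ^ k‖) 1 := by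
  have h : ‖a‖ * ‖z‖ < 1 := by nlinarith [norm_nonneg a, norm_nonneg z]
  convert hasSum_norm_mobiusCoeff_mul_pow ha.le h using 1
  rw [eq_comm, ← eq_sub_iff_add_eq', div_eq_iff (sub_pos.2 h).ne']
  linear_combination (1 - ‖a‖) * hz

theorem tsum_coe_nnnorm_eq_ofReal_of_hasSum_norm {ι E : Type*} [SeminormedAddCommGroup E]
    {f : ι → E} {s : ℝ} (h : HasSum (fun k => ‖f k‖) s) :
    ∑' k, (‖f k‖₊ : ENNReal) = ENNReal.ofReal s := by
  rw [ENNReal.ofReal_eq_coe_nnreal (h.nonneg fun _ => norm_nonneg _)]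
  exact (ENNReal.hasSum_coe.2 (NNReal.hasSum_coe.1 h)).tsum_eq

/-- Bohr's theorem, sharpness: the constant 1/3 cannot be replaced by any
larger constant. -/
theorem bohr_sharp :
    ∀ r : ℝ, 1 / 3 < r → r < 1 →
      ∃ c : ℕ → ℂ,
        (∀ z : ℂ, ‖z‖ < 1 → Summable (fun k => c k * z ^ k)) ∧
        (∀ z : ℂ, ‖z‖ < 1 → ‖∑' k, c k * z ^ k‖ < 1) ∧
        ∃ z₀ : ℂ, ‖z₀‖ < r ∧ 1 ≤ ∑' k, (‖c k * z₀ ^ k‖₊ : ENNReal) := by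
  intro r hr₁ hr₂
  have hr₀ : 0 < r := by linarith
  -- `1 / (1 + 2a) < r` iff `a > (1 - r) / (2r)`; take `a` halfway to `1` and `z₀ = 1 / (1 + 2a)`.
  set a : ℂ := (((1 + r) / (4 * r) : ℝ) : ℂ)
  set z₀ : ℂ := ((2 * r / (3 * r + 1) : ℝ) : ℂ)
  have ha_norm : ‖a‖ = (1 + r) / (4 * r) := by
    rw [Complex.norm_real, Real.norm_of_nonneg (by positivity)]
  have hz₀_norm : ‖z₀‖ = 2 * r / (3 * r + 1) := by
    rw [Complex.norm_real, Real.norm_of_nonneg (by positivity)]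
  have ha : ‖a‖ < 1 := by rw [ha_norm, div_lt_one (by positivity)]; linarith
  refine ⟨mobiusCoeff a, fun z hz => ?_, fun z hz => norm_tsum_mobiusCoeff_mul_pow_lt_one ha hz,
    z₀, ?_, ?_⟩
  · exact (hasSum_mobiusCoeff_mul_pow
      (mul_lt_one_of_nonneg_of_lt_one_left (norm_nonneg a) ha hz.le)).summable
  · rw [hz₀_norm, div_lt_iff₀ (by positivity)]; nlinarith
  · have hz₀ : ‖z₀‖ * (1 + 2 * ‖a‖) = 1 := by
      rw [ha_norm, hz₀_norm]; field_simp; ring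
    rw [tsum_coe_nnnorm_eq_ofReal_of_hasSum_norm
      (hasSum_norm_mobiusCoeff_mul_pow_of_mul_eq_one ha hz₀), ENNReal.ofReal_one]
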